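/- Cut-set converse bound for classical erasure-prone storage with shared-randomness assistance: for any feasible scheme for CS-SRA(N,K,N_B,K_B) with uniform message Y₀ of size κλ₀ (in q-ary units), storage nodes Y₁,…,Y_N each of size κ, and SR nodes B₁,…,B_{N_B} each of size κλ_B, satisfying the decodability constraint H(Y₀ | Y_𝒦, B_{𝒦_B}) = 0 for all 𝒦 of size K and 𝒦_B of size K_B, and the security constraint I(Y₀; Y_{𝒦ᶜ}, B_{𝒦_Bᶜ}) = 0, it holds that λ₀ ≤ max(2K−N, 0) + λ_B · max(2K_B − N_B, 0). -/

import Mathlib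

open scoped Classical in
/-- Probability that the random variable `X` takes value `s`, under the (finite) probability
mass function `p` on the sample space `Ω`. -/
noncomputable def pmfOf {Ω S : Type*} [Fintype Ω] (p : Ω → ℝ) (X : Ω → S) (s : S) : ℝ :=
  ∑ ω : Ω, if X ω = s then p ω else 0

/-- Shannon entropy (in nats) of the random variable `X` under `p`. -/
noncomputable def Hent {Ω S : Type*} [Fintype Ω] [Fintype S] (p : Ω → ℝ) (X : Ω → S) : ℝ :=
  -∑ s : S, pmfOf p X s * Real.log (pmfOf p X s)

/-- Conditional entropy `H(X | Z)`. -/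
noncomputable def condH {Ω S U : Type*} [Fintype Ω] [Fintype S] [Fintype U]
    (p : Ω → ℝ) (X : Ω → S) (Z : Ω → U) : ℝ :=
  Hent p (fun ω => (X ω, Z ω)) - Hent p Z

/-- Mutual information `I(X ; Y)`. -/
noncomputable def MI {Ω S T : Type*} [Fintype Ω] [Fintype S] [Fintype T]
    (p : Ω → ℝ) (X : Ω → S) (Y : Ω → T) : ℝ :=
  Hent p X + Hent p Y - Hent p (fun ω => (X ω, Y ω))

/-- Conditional mutual information `I(X ; Y | Z)`. -/
noncomputable def CMI {Ω S T U : Type*} [Fintype Ω] [Fintype S] [Fintype T] [Fintype U]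
    (p : Ω → ℝ) (X : Ω → S) (Y : Ω → T) (Z : Ω → U) : ℝ :=
  Hent p (fun ω => (X ω, Z ω)) + Hent p (fun ω => (Y ω, Z ω))
    - Hent p (fun ω => (X ω, Y ω, Z ω)) - Hent p Z

/-!
Choose decoding sets `𝒦₁, 𝒦_{B,1}` and secrecy sets `𝒦₂, 𝒦_{B,2}` of the prescribed sizes
whose overlaps are as small as possible, of sizes `max (2K - N) 0` and `max (2K_B - N_B) 0`.
What the decoder reads outside the overlaps (`seen`) is also visible through the complements
of the secrecy sets, so it is independent of `Y₀`. Writing `rest` for the nodes in the overlaps,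
`H(Y₀) + H(seen) = H(Y₀, seen) ≤ H(Y₀, view) = H(view) ≤ H(rest) + H(seen)`, and `H(rest)` is
at most the number of overlap nodes times their individual size bounds.
-/

open Finset

open Real in
lemma sub_le_mul_log_sub_log {a u : ℝ} (ha : 0 < a) (hu : 0 < u) :
    a - u ≤ a * (log a - log u) := by
  have h := mul_le_mul_of_nonneg_left (one_sub_inv_le_log_of_pos (div_pos ha hu)) ha.le
  rwa [inv_div, mul_sub, mul_one, mul_div_cancel₀ _ ha.ne', log_div ha.ne' hu.ne'] at h

lemma Nat.cast_tsub_eq_max {R : Type*} [Ring R] [LinearOrder R] [IsStrictOrderedRing R]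
    (m n : ℕ) : ((m - n : ℕ) : R) = max ((m : R) - n) 0 := by
  rcases le_total n m with h | h
  · rw [Nat.cast_sub h, max_eq_left (sub_nonneg.2 (Nat.cast_le.2 h))]
  · rw [Nat.sub_eq_zero_of_le h, Nat.cast_zero, max_eq_right (sub_nonpos.2 (Nat.cast_le.2 h))]

lemma Finset.exists_card_eq_card_eq_card_inter_eq {α : Type*} [Fintype α] [DecidableEq α]
    {k : ℕ} (hk : k ≤ Fintype.card α) :
    ∃ s t : Finset α, #s = k ∧ #t = k ∧ #(s ∩ t) = 2 * k - Fintype.card α := by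
  obtain ⟨s, -, hs⟩ := exists_subset_card_eq (s := (univ : Finset α)) (by simpa using hk)
  have hsc : #sᶜ = Fintype.card α - k := by rw [card_compl, hs]
  rcases le_or_gt (2 * k) (Fintype.card α) with hle | hgt
  · obtain ⟨t, hts, ht⟩ := exists_subset_card_eq (s := sᶜ) (n := k) (by omega)
    refine ⟨s, t, hs, ht, ?_⟩
    rw [disjoint_iff_inter_eq_empty.1 (disjoint_right.2 fun _ hx => mem_compl.1 (hts hx)),
      card_empty]
    omega
  · obtain ⟨t, hst, -, ht⟩ := exists_subsuperset_card_eq (subset_univ sᶜ) (n := k)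
      (by omega) (by simpa using hk)
    refine ⟨s, t, hs, ht, ?_⟩
    have hunion : s ∪ t = univ := eq_univ_of_forall fun x => by
      by_cases hx : x ∈ s
      · exact mem_union_left t hx
      · exact mem_union_right s (hst (mem_compl.2 hx))
    have := card_inter_add_card_union s t
    rw [hunion, card_univ] at this
    omega

lemma Finset.sdiff_subset_compl {α : Type*} [Fintype α] [DecidableEq α] (s t : Finset α) :
    s \ t ⊆ tᶜ :=
  fun _ hx => mem_compl.2 (mem_sdiff.1 hx).2

lemma Finset.exists_restrict_eq_of_subset_union {ι : Type*} [DecidableEq ι] {β : ι → Type*}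
    {s t u : Finset ι} (h : u ⊆ s ∪ t) :
    ∃ g : ((i : s) → β i) → ((i : t) → β i) → (i : u) → β i,
      ∀ v : (i : ι) → β i, g (s.restrict v) (t.restrict v) = u.restrict v := by
  refine ⟨fun a b i => if hi : i.1 ∈ s then a ⟨i, hi⟩
    else b ⟨i, (mem_union.1 (h i.2)).resolve_left hi⟩, fun v => funext fun i => ?_⟩
  dsimp only
  split_ifs <;> rfl

section Entropy

open scoped Classical
open Real

variable {Ω S T U : Type*} [Fintype Ω] (p : Ω → ℝ)

lemma pmfOf_nonneg (hp0 : ∀ ω, 0 ≤ p ω) (X : Ω → S) (s : S) : 0 ≤ pmfOf p X s :=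
  sum_nonneg fun ω _ => by split_ifs <;> simp [hp0 ω]

lemma sum_pmfOf [Fintype S] (X : Ω → S) : ∑ s, pmfOf p X s = ∑ ω, p ω := by
  simp [pmfOf, sum_comm (γ := S)]

lemma pmfOf_comp [Fintype S] (f : S → T) (X : Ω → S) (t : T) :
    pmfOf p (fun ω => f (X ω)) t = ∑ s with f s = t, pmfOf p X s := by
  simp only [pmfOf]
  rw [sum_comm]
  refine sum_congr rfl fun ω _ => ?_
  rw [sum_ite_eq]
  simp

lemma pmfOf_le_pmfOf_comp [Fintype S] (hp0 : ∀ ω, 0 ≤ p ω) (f : S → T) (X : Ω → S) (s : S) :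
    pmfOf p X s ≤ pmfOf p (fun ω => f (X ω)) (f s) := by
  rw [pmfOf_comp p f X]
  exact single_le_sum (fun s _ => pmfOf_nonneg p hp0 X s) (mem_filter.2 ⟨mem_univ s, rfl⟩)

lemma sum_pmfOf_pair_left [Fintype S] (X : Ω → S) (Z : Ω → U) (z : U) :
    ∑ x, pmfOf p (fun ω => (X ω, Z ω)) (x, z) = pmfOf p Z z := by
  simp only [pmfOf, Prod.ext_iff]
  rw [sum_comm]
  refine sum_congr rfl fun ω _ => ?_
  simp [ite_and]

lemma sum_pmfOf_mul_pmfOf_div_pmfOf [Fintype S] [Fintype T] [Fintype U]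
    (X : Ω → S) (Y : Ω → T) (Z : Ω → U) :
    ∑ τ : S × T × U, pmfOf p (fun ω => (X ω, Z ω)) (τ.1, τ.2.2) *
      pmfOf p (fun ω => (Y ω, Z ω)) (τ.2.1, τ.2.2) / pmfOf p Z τ.2.2 = ∑ ω, p ω :=
  calc _ = ∑ z, (∑ x, pmfOf p (fun ω => (X ω, Z ω)) (x, z)) *
        (∑ y, pmfOf p (fun ω => (Y ω, Z ω)) (y, z)) / pmfOf p Z z := by
        simp only [Fintype.sum_prod_type, sum_mul_sum, sum_div]
        rw [sum_congr rfl fun x _ => sum_comm, sum_comm]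
    _ = ∑ ω, p ω := by simp only [sum_pmfOf_pair_left, mul_self_div_self, sum_pmfOf]

lemma Hent_comp_eq_sum [Fintype S] [Fintype T] (f : S → T) (X : Ω → S) :
    Hent p (fun ω => f (X ω)) =
      -∑ s, pmfOf p X s * log (pmfOf p (fun ω => f (X ω)) (f s)) := by
  rw [Hent, ← sum_fiberwise _ f]
  congr 1
  refine sum_congr rfl fun t _ => ?_
  rw [sum_congr rfl fun s hs => by rw [(mem_filter.1 hs).2], ← sum_mul, ← pmfOf_comp]

theorem CMI_nonneg [Fintype S] [Fintype T] [Fintype U] (hp0 : ∀ ω, 0 ≤ p ω)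
    (X : Ω → S) (Y : Ω → T) (Z : Ω → U) : 0 ≤ CMI p X Y Z := by
  set W := fun ω => (X ω, Y ω, Z ω)
  set a : S × T × U → ℝ := pmfOf p W
  set pXZ : S × T × U → ℝ := fun τ => pmfOf p (fun ω => (X ω, Z ω)) (τ.1, τ.2.2)
  set pYZ : S × T × U → ℝ := fun τ => pmfOf p (fun ω => (Y ω, Z ω)) (τ.2.1, τ.2.2)
  set pZ : S × T × U → ℝ := fun τ => pmfOf p Z τ.2.2
  -- Gibbs' inequality against `u`, which has the same total mass as `a`
  set u : S × T × U → ℝ := fun τ => pXZ τ * pYZ τ / pZ τ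
  have hCMI : CMI p X Y Z =
      ∑ τ, a τ * (log (a τ) + log (pZ τ) - log (pXZ τ) - log (pYZ τ)) := by
    have hXZ : Hent p (fun ω => (X ω, Z ω)) = -∑ τ, a τ * log (pXZ τ) :=
      Hent_comp_eq_sum p (fun τ : S × T × U => (τ.1, τ.2.2)) W
    have hYZ : Hent p (fun ω => (Y ω, Z ω)) = -∑ τ, a τ * log (pYZ τ) :=
      Hent_comp_eq_sum p (fun τ : S × T × U => τ.2) W
    have hZ : Hent p Z = -∑ τ, a τ * log (pZ τ) :=
      Hent_comp_eq_sum p (fun τ : S × T × U => τ.2.2) W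
    have hW : Hent p W = -∑ τ, a τ * log (a τ) := rfl
    rw [CMI, hXZ, hYZ, hZ, hW]
    simp only [mul_add, mul_sub, sum_add_distrib, sum_sub_distrib]
    ring
  have hpt : ∀ τ, a τ - u τ ≤ a τ * (log (a τ) + log (pZ τ) - log (pXZ τ) - log (pYZ τ)) := by
    intro τ
    have ha0 : 0 ≤ a τ := pmfOf_nonneg p hp0 W τ
    rcases ha0.eq_or_lt with h0 | ha
    · rw [← h0, zero_sub, zero_mul, neg_nonpos]
      exact div_nonneg (mul_nonneg (pmfOf_nonneg p hp0 _ _) (pmfOf_nonneg p hp0 _ _))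
        (pmfOf_nonneg p hp0 _ _)
    have hxz : 0 < pXZ τ := ha.trans_le (pmfOf_le_pmfOf_comp p hp0 (fun τ => (τ.1, τ.2.2)) W τ)
    have hyz : 0 < pYZ τ := ha.trans_le (pmfOf_le_pmfOf_comp p hp0 (fun τ => τ.2) W τ)
    have hz : 0 < pZ τ := ha.trans_le (pmfOf_le_pmfOf_comp p hp0 (fun τ => τ.2.2) W τ)
    have h := sub_le_mul_log_sub_log ha (by positivity : 0 < u τ)
    rw [log_div (by positivity) hz.ne', log_mul hxz.ne' hyz.ne'] at h
    convert h using 2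
    ring
  calc 0 = ∑ τ, (a τ - u τ) := by
        rw [sum_sub_distrib, sum_pmfOf_mul_pmfOf_div_pmfOf, sum_pmfOf, sub_self]
    _ ≤ CMI p X Y Z := hCMI ▸ sum_le_sum fun τ _ => hpt τ

lemma Hent_le_of_eq_comp [Fintype S] [Fintype T] (hp0 : ∀ ω, 0 ≤ p ω)
    {X : Ω → S} {Y : Ω → T} (f : S → T) (hY : ∀ ω, Y ω = f (X ω)) :
    Hent p Y ≤ Hent p X := by
  rw [funext hY, Hent_comp_eq_sum, Hent, neg_le_neg_iff]
  refine sum_le_sum fun s _ => ?_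
  rcases (pmfOf_nonneg p hp0 X s).eq_or_lt with h0 | hpos
  · simp [← h0]
  · exact mul_le_mul_of_nonneg_left
      (log_le_log hpos (pmfOf_le_pmfOf_comp p hp0 f X s)) hpos.le

lemma Hent_eq_of_eq_comp [Fintype S] [Fintype T] (hp0 : ∀ ω, 0 ≤ p ω)
    {X : Ω → S} {Y : Ω → T} (f : S → T) (g : T → S)
    (hY : ∀ ω, Y ω = f (X ω)) (hX : ∀ ω, X ω = g (Y ω)) : Hent p Y = Hent p X :=
  le_antisymm (Hent_le_of_eq_comp p hp0 f hY) (Hent_le_of_eq_comp p hp0 g hX)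

lemma Hent_const_unit (hp1 : ∑ ω, p ω = 1) : Hent p (fun _ : Ω => ()) = 0 := by
  simp [Hent, pmfOf, hp1]

lemma Hent_pair_le_add [Fintype S] [Fintype T] (hp0 : ∀ ω, 0 ≤ p ω) (hp1 : ∑ ω, p ω = 1)
    (X : Ω → S) (Y : Ω → T) : Hent p (fun ω => (X ω, Y ω)) ≤ Hent p X + Hent p Y := by
  have h := CMI_nonneg p hp0 X Y (fun _ => ())
  have hXY : Hent p (fun ω => (X ω, Y ω, ())) = Hent p (fun ω => (X ω, Y ω)) :=
    Hent_eq_of_eq_comp p hp0 (fun xy => (xy.1, xy.2, ())) (fun xyz => (xyz.1, xyz.2.1))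
      (fun _ => rfl) (fun _ => rfl)
  rw [CMI, Hent_const_unit p hp1, hXY,
    Hent_eq_of_eq_comp p hp0 (fun x => (x, ())) Prod.fst (fun _ => rfl) (fun _ => rfl),
    Hent_eq_of_eq_comp p hp0 (fun y => (y, ())) Prod.fst (fun _ => rfl) (fun _ => rfl)] at h
  linarith

lemma MI_le_of_eq_comp [Fintype S] [Fintype T] [Fintype U] (hp0 : ∀ ω, 0 ≤ p ω)
    (X : Ω → S) {V : Ω → T} {W : Ω → U} (f : T → U) (hW : ∀ ω, W ω = f (V ω)) :
    MI p X W ≤ MI p X V := by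
  have h := CMI_nonneg p hp0 X V W
  rw [CMI, Hent_eq_of_eq_comp p hp0 (fun v => (v, f v)) Prod.fst (fun ω => by rw [hW])
      (fun _ => rfl),
    Hent_eq_of_eq_comp p hp0 (fun xv : S × T => (xv.1, xv.2, f xv.2))
      (fun xvw => (xvw.1, xvw.2.1)) (fun ω => by rw [hW]) (fun _ => rfl)] at h
  rw [MI, MI]
  linarith

lemma Hent_restrict_le_sum {ι α : Type*} [DecidableEq ι] [Fintype α] (hp0 : ∀ ω, 0 ≤ p ω)
    (hp1 : ∑ ω, p ω = 1) (V : ι → Ω → α) (s : Finset ι) :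
    Hent p (fun ω (i : s) => V i ω) ≤ ∑ i ∈ s, Hent p (V i) := by
  induction s using Finset.cons_induction with
  | empty =>
    rw [sum_empty, ← Hent_const_unit p hp1]
    exact Hent_le_of_eq_comp p hp0 (fun _ i => (notMem_empty _ i.2).elim)
      fun _ => funext fun i => (notMem_empty _ i.2).elim
  | cons a s ha ih =>
    obtain ⟨g, hg⟩ := exists_restrict_eq_of_subset_union (β := fun _ => α)
      (cons_subset.2 ⟨mem_union_left s (mem_singleton_self a), subset_union_right⟩)
    have hsingle : Hent p (fun ω (i : ({a} : Finset ι)) => V i ω) ≤ Hent p (V a) :=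
      Hent_le_of_eq_comp p hp0 (fun x _ => x)
        fun ω => funext fun i => by rw [mem_singleton.1 i.2]
    calc Hent p (fun ω (i : cons a s ha) => V i ω)
        ≤ Hent p (fun ω => ((fun i : ({a} : Finset ι) => V i ω), fun i : s => V i ω)) :=
          Hent_le_of_eq_comp p hp0 (fun x => g x.1 x.2) fun ω => (hg (V · ω)).symm
      _ ≤ Hent p (V a) + ∑ i ∈ s, Hent p (V i) :=
          (Hent_pair_le_add p hp0 hp1 _ _).trans (add_le_add hsingle ih)
      _ = ∑ i ∈ cons a s ha, Hent p (V i) := by rw [sum_cons]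

lemma Hent_restrict_le_card_mul {ι α : Type*} [DecidableEq ι] [Fintype α]
    (hp0 : ∀ ω, 0 ≤ p ω) (hp1 : ∑ ω, p ω = 1) (V : ι → Ω → α) (s : Finset ι) {c : ℝ}
    (hc : ∀ i ∈ s, Hent p (V i) ≤ c) :
    Hent p (fun ω (i : s) => V i ω) ≤ #s * c :=
  (Hent_restrict_le_sum p hp0 hp1 V s).trans (by simpa using sum_le_card_nsmul s _ c hc)

theorem Hent_le_of_condH_eq_zero_of_MI_eq_zero {M α β γ δ : Type*} [Fintype M] [Fintype α]
    [Fintype β] [Fintype γ] [Fintype δ] (hp0 : ∀ ω, 0 ≤ p ω) (hp1 : ∑ ω, p ω = 1)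
    {X : Ω → M} {view : Ω → α} {leak : Ω → β} {rest : Ω → γ} {seen : Ω → δ}
    (hdec : condH p X view = 0) (hsec : MI p X leak = 0)
    (φ : γ × δ → α) (hview : ∀ ω, view ω = φ (rest ω, seen ω))
    (g : α → δ) (hseen_view : ∀ ω, seen ω = g (view ω))
    (h : β → δ) (hseen_leak : ∀ ω, seen ω = h (leak ω)) :
    Hent p X ≤ Hent p rest := by
  have hindep : MI p X seen ≤ 0 := hsec ▸ MI_le_of_eq_comp p hp0 X h hseen_leak
  have hmono : Hent p (fun ω => (X ω, seen ω)) ≤ Hent p (fun ω => (X ω, view ω)) :=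
    Hent_le_of_eq_comp p hp0 (fun xw => (xw.1, g xw.2)) fun ω => by rw [hseen_view]
  have hview_le : Hent p view ≤ Hent p (fun ω => (rest ω, seen ω)) :=
    Hent_le_of_eq_comp p hp0 φ hview
  have hsub := Hent_pair_le_add p hp0 hp1 rest seen
  rw [condH] at hdec
  rw [MI] at hindep
  linarith

end Entropy

theorem Hent_le_Hent_restrict_inter {Ω ι κ M α β : Type*} [Fintype Ω] [Fintype ι]
    [DecidableEq ι] [Fintype κ] [DecidableEq κ] [Fintype M] [Fintype α] [Fintype β]
    (p : Ω → ℝ) (hp0 : ∀ ω, 0 ≤ p ω) (hp1 : ∑ ω, p ω = 1)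
    (X : Ω → M) (Y : ι → Ω → α) (B : κ → Ω → β) (K₁ K₂ : Finset ι) (L₁ L₂ : Finset κ)
    (hdec : condH p X (fun ω => ((fun n : ↥K₁ => Y n ω), fun i : ↥L₁ => B i ω)) = 0)
    (hsec : MI p X (fun ω => ((fun n : ↥K₂ᶜ => Y n ω), fun i : ↥L₂ᶜ => B i ω)) = 0) :
    Hent p X ≤
      Hent p (fun ω => ((fun n : ↥(K₁ ∩ K₂) => Y n ω), fun i : ↥(L₁ ∩ L₂) => B i ω)) := by
  obtain ⟨gY, hgY⟩ := exists_restrict_eq_of_subset_union (β := fun _ => α)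
    (sdiff_union_inter K₁ K₂).ge
  obtain ⟨gB, hgB⟩ := exists_restrict_eq_of_subset_union (β := fun _ => β)
    (sdiff_union_inter L₁ L₂).ge
  exact Hent_le_of_condH_eq_zero_of_MI_eq_zero p hp0 hp1 hdec hsec
    (rest := fun ω => ((fun n : ↥(K₁ ∩ K₂) => Y n ω), fun i : ↥(L₁ ∩ L₂) => B i ω))
    (seen := fun ω => ((fun n : ↥(K₁ \ K₂) => Y n ω), fun i : ↥(L₁ \ L₂) => B i ω))
    (fun rs => (gY rs.2.1 rs.1.1, gB rs.2.2 rs.1.2))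
    (fun ω => Prod.ext (hgY (Y · ω)).symm (hgB (B · ω)).symm)
    (fun w => (restrict₂ (π := fun _ => α) sdiff_subset w.1,
      restrict₂ (π := fun _ => β) sdiff_subset w.2))
    (fun _ => rfl)
    (fun v => (restrict₂ (π := fun _ => α) (sdiff_subset_compl K₁ K₂) v.1,
      restrict₂ (π := fun _ => β) (sdiff_subset_compl L₁ L₂) v.2))
    (fun _ => rfl)

theorem cssra_cutset_bound_general
    {Ω M YT BT : Type*} [Fintype Ω] [Fintype M] [Fintype YT] [Fintype BT]
    (N K NB KB : ℕ) (hK : K ≤ N) (hKB : KB ≤ NB)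
    (p : Ω → ℝ) (hp0 : ∀ ω, 0 ≤ p ω) (hp1 : ∑ ω, p ω = 1)
    (Y0 : Ω → M) (Y : Fin N → Ω → YT) (B : Fin NB → Ω → BT)
    (q κ lam0 lamB : ℝ) (hq : 1 < q) (hκ : 0 < κ)
    (hH0 : Hent p Y0 = κ * lam0 * Real.log q)
    (hHY : ∀ n : Fin N, Hent p (Y n) ≤ κ * Real.log q)
    (hHB : ∀ i : Fin NB, Hent p (B i) ≤ κ * lamB * Real.log q)
    (hdec : ∀ (𝒦 : Finset (Fin N)) (𝒦B : Finset (Fin NB)), 𝒦.card = K → 𝒦B.card = KB →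
      condH p Y0 (fun ω => ((fun n : ↥𝒦 => Y n ω), (fun i : ↥𝒦B => B i ω))) = 0)
    (hsec : ∀ (𝒦 : Finset (Fin N)) (𝒦B : Finset (Fin NB)), 𝒦.card = K → 𝒦B.card = KB →
      MI p Y0 (fun ω => ((fun n : ↥(𝒦ᶜ) => Y n ω), (fun i : ↥(𝒦Bᶜ) => B i ω))) = 0) :
    lam0 ≤ max ((2 * K : ℝ) - N) 0 + lamB * max ((2 * KB : ℝ) - NB) 0 := by
  obtain ⟨K₁, K₂, hK₁, hK₂, hK₁₂⟩ :=
    exists_card_eq_card_eq_card_inter_eq (α := Fin N) (by simpa using hK)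
  obtain ⟨L₁, L₂, hL₁, hL₂, hL₁₂⟩ :=
    exists_card_eq_card_eq_card_inter_eq (α := Fin NB) (by simpa using hKB)
  have hcut := Hent_le_Hent_restrict_inter p hp0 hp1 Y0 Y B K₁ K₂ L₁ L₂
    (hdec K₁ L₁ hK₁ hL₁) (hsec K₂ L₂ hK₂ hL₂)
  have hrest := (Hent_pair_le_add p hp0 hp1 _ _).trans (add_le_add
    (Hent_restrict_le_card_mul p hp0 hp1 Y (K₁ ∩ K₂) fun n _ => hHY n)
    (Hent_restrict_le_card_mul p hp0 hp1 B (L₁ ∩ L₂) fun i _ => hHB i))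
  rw [hK₁₂, hL₁₂, Fintype.card_fin, Fintype.card_fin, Nat.cast_tsub_eq_max,
    Nat.cast_tsub_eq_max] at hrest
  push_cast at hrest
  refine le_of_mul_le_mul_right ?_ (mul_pos hκ (Real.log_pos hq))
  calc lam0 * (κ * Real.log q) = Hent p Y0 := by rw [hH0]; ring
    _ ≤ _ := hcut.trans hrest
    _ = (max ((2 * K : ℝ) - N) 0 + lamB * max ((2 * KB : ℝ) - NB) 0) * (κ * Real.log q) := by
      ring

/-- Cut-set converse bound for classical erasure-prone storage with shared-randomness
assistance, `CS-SRA(N, K, N_B, K_B)`: with a uniform message `Y₀` of entropy `κλ₀ log q`,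
storage nodes `Y₁,…,Y_N` of entropy at most `κ log q` each, SR nodes `B₁,…,B_{N_B}` of
entropy at most `κ λ_B log q` each, message independent of the shared randomness,
decodability `H(Y₀ ∣ Y_𝒦, B_{𝒦_B}) = 0` for all `|𝒦| = K`, `|𝒦_B| = K_B` and security
`I(Y₀; Y_{𝒦ᶜ}, B_{𝒦_Bᶜ}) = 0`, it holds that
`λ₀ ≤ max (2K − N) 0 + λ_B · max (2K_B − N_B) 0`. -/
theorem cssra_cutset_bound
    {Ω M YT BT : Type*} [Fintype Ω] [Fintype M] [Fintype YT] [Fintype BT]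
    (N K NB KB : ℕ) (hK : K ≤ N) (hKB : KB ≤ NB)
    (p : Ω → ℝ) (hp0 : ∀ ω, 0 ≤ p ω) (hp1 : ∑ ω, p ω = 1)
    (Y0 : Ω → M) (Y : Fin N → Ω → YT) (B : Fin NB → Ω → BT)
    (q κ lam0 lamB : ℝ) (hq : 1 < q) (hκ : 0 < κ) (hlam0 : 0 ≤ lam0) (hlamB : 0 ≤ lamB)
    (hunif : ∀ y : M, pmfOf p Y0 y = 1 / (Fintype.card M : ℝ))
    (hH0 : Hent p Y0 = κ * lam0 * Real.log q)
    (hHY : ∀ n : Fin N, Hent p (Y n) ≤ κ * Real.log q)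
    (hHB : ∀ i : Fin NB, Hent p (B i) ≤ κ * lamB * Real.log q)
    (hindep : ∀ (y : M) (b : Fin NB → BT),
      pmfOf p (fun ω => (Y0 ω, fun i => B i ω)) (y, b)
        = pmfOf p Y0 y * pmfOf p (fun ω => fun i => B i ω) b)
    (hdec : ∀ (𝒦 : Finset (Fin N)) (𝒦B : Finset (Fin NB)), 𝒦.card = K → 𝒦B.card = KB →
      condH p Y0 (fun ω => ((fun n : ↥𝒦 => Y n ω), (fun i : ↥𝒦B => B i ω))) = 0)
    (hsec : ∀ (𝒦 : Finset (Fin N)) (𝒦B : Finset (Fin NB)), 𝒦.card = K → 𝒦B.card = KB →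
      MI p Y0 (fun ω => ((fun n : ↥(𝒦ᶜ) => Y n ω), (fun i : ↥(𝒦Bᶜ) => B i ω))) = 0) :
    lam0 ≤ max ((2 * K : ℝ) - N) 0 + lamB * max ((2 * KB : ℝ) - NB) 0 :=
  cssra_cutset_bound_general N K NB KB hK hKB p hp0 hp1 Y0 Y B q κ lam0 lamB hq hκ hH0 hHY hHB hdec
    hsec
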